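/- If H_{r-1} is a parity check matrix of a binary linear code with minimum distance 3, then the code with parity check matrix H_r obtained by the doubling construction also has minimum distance 3. -/

import Mathlib

/-- The doubling construction: `H_r = [[0…0 | 1…1], [H | H]]`. -/
def doubling {r n : ℕ} (H : Matrix (Fin r) (Fin n) (ZMod 2)) :
    Matrix (Unit ⊕ Fin r) (Fin n ⊕ Fin n) (ZMod 2) :=
  Matrix.of fun i j =>
    match i, j with
    | Sum.inl _, Sum.inl _ => 0
    | Sum.inl _, Sum.inr _ => 1
    | Sum.inr i, Sum.inl j => H i j
    | Sum.inr i, Sum.inr j => H i j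

/-!
Write a word of the doubled code as `(a, b)`. The top row of the doubled matrix says that `b`
has even weight, and the other rows say that `H (a + b) = 0`. If `a ≠ b`, then
`wt (a, b) ≥ wt (a + b) ≥ 3`. If `a = b`, then `a ≠ 0` has even weight, so `wt (a, b) = 2 wt a ≥ 4`.
A word `x` of weight 3 in the original code gives the word `(x, 0)` of weight 3.
-/

section Hamming

variable {ι κ β : Type*} [Fintype ι] [Fintype κ] [DecidableEq β]

theorem hammingNorm_sum_elim [Zero β] (a : ι → β) (b : κ → β) :
    hammingNorm (Sum.elim a b) = hammingNorm a + hammingNorm b := by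
  simp only [hammingNorm, Finset.card_filter]
  exact Fintype.sum_sum_type _

theorem hammingNorm_add_le [AddZeroClass β] (a b : ι → β) :
    hammingNorm (a + b) ≤ hammingNorm a + hammingNorm b := by
  classical
  refine (Finset.card_le_card ?_).trans (Finset.card_union_le _ _)
  rw [← Finset.filter_or]
  refine Finset.monotone_filter_right _ fun j _ hj => ?_
  by_contra! h
  simp [h.1, h.2] at hj

end Hamming

section Binary

variable {ι : Type*} [Fintype ι]

theorem sum_eq_hammingNorm_cast (a : ι → ZMod 2) : ∑ j, a j = (hammingNorm a : ZMod 2) := by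
  classical
  have h_one : ∀ j, a j ≠ 0 → a j = 1 := fun j => Fin.eq_one_of_ne_zero (a j)
  rw [← Finset.sum_filter_ne_zero, hammingNorm, Finset.sum_congr rfl fun j hj =>
    h_one j (Finset.mem_filter.mp hj).2]
  simp

theorem two_le_hammingNorm_of_sum_eq_zero {a : ι → ZMod 2} (h_sum : ∑ j, a j = 0) (ha : a ≠ 0) :
    2 ≤ hammingNorm a := by
  rw [sum_eq_hammingNorm_cast, ZMod.natCast_eq_zero_iff_even] at h_sum
  have := hammingNorm_pos_iff.mpr ha
  obtain ⟨k, hk⟩ := h_sum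
  omega

end Binary

theorem doubling_mulVec_sum_elim {r n : ℕ} (H : Matrix (Fin r) (Fin n) (ZMod 2))
    (a b : Fin n → ZMod 2) :
    Matrix.mulVec (doubling H) (Sum.elim a b) =
      Sum.elim (fun _ => ∑ j, b j) (Matrix.mulVec H (a + b)) := by
  ext (_ | i) <;>
    simp [Matrix.mulVec, dotProduct, doubling, Fintype.sum_sum_type, mul_add, Finset.sum_add_distrib]

theorem three_le_hammingNorm_of_doubling_mulVec_eq_zero {r n : ℕ}
    {H : Matrix (Fin r) (Fin n) (ZMod 2)}
    (hd : ∀ x : Fin n → ZMod 2, Matrix.mulVec H x = 0 → x ≠ 0 → 3 ≤ hammingNorm x)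
    {a b : Fin n → ZMod 2} (hy : Matrix.mulVec (doubling H) (Sum.elim a b) = 0)
    (hy0 : Sum.elim a b ≠ 0) : 3 ≤ hammingNorm (Sum.elim a b) := by
  rw [doubling_mulVec_sum_elim, ← Sum.elim_zero_zero, Sum.elim_eq_iff, funext_iff] at hy
  obtain ⟨h_sum, h_syndrome⟩ := hy
  rw [hammingNorm_sum_elim]
  by_cases hab : a + b = 0
  · obtain rfl : a = b := funext fun j => CharTwo.add_eq_zero.mp (congrFun hab j)
    have ha0 : a ≠ 0 := fun ha => hy0 (by rw [ha, Sum.elim_zero_zero])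
    have := two_le_hammingNorm_of_sum_eq_zero (h_sum ()) ha0
    omega
  · exact (hd _ h_syndrome hab).trans (hammingNorm_add_le a b)

/-- If the code with parity check matrix `H` has minimum distance exactly 3,
then the doubled code also has minimum distance exactly 3. -/
theorem stmt_1 {r n : ℕ} (H : Matrix (Fin r) (Fin n) (ZMod 2))
    (hd1 : ∀ x : Fin n → ZMod 2, Matrix.mulVec H x = 0 → x ≠ 0 → 3 ≤ hammingNorm x)
    (hd2 : ∃ x : Fin n → ZMod 2, Matrix.mulVec H x = 0 ∧ x ≠ 0 ∧ hammingNorm x = 3) :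
    (∀ y : Fin n ⊕ Fin n → ZMod 2,
        Matrix.mulVec (doubling H) y = 0 → y ≠ 0 → 3 ≤ hammingNorm y) ∧
    (∃ y : Fin n ⊕ Fin n → ZMod 2,
        Matrix.mulVec (doubling H) y = 0 ∧ y ≠ 0 ∧ hammingNorm y = 3) := by
  refine ⟨fun y => ?_, ?_⟩
  · rw [← Sum.elim_comp_inl_inr y]
    exact three_le_hammingNorm_of_doubling_mulVec_eq_zero hd1
  · obtain ⟨x, hx, hx0, hx3⟩ := hd2
    refine ⟨Sum.elim x 0, ?_, ?_, ?_⟩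
    · rw [doubling_mulVec_sum_elim, add_zero, hx]
      ext (_ | _) <;> simp
    · rw [Ne, ← Sum.elim_zero_zero, Sum.elim_eq_iff]
      exact fun h => hx0 h.1
    · rw [hammingNorm_sum_elim, hx3, hammingNorm_zero]
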